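/- arXiv:1705.08259 — 7 statements merged into one kernel-verified Lean document; each statement's English description precedes it below -/
import Mathlib

section
/- Let $G$ be a directed graph with $M$ vertices, each incident to exactly $n$ edges, with incidence vectors $\chi_k \in \mathbb{R}^N$ as defined ($+1$ at edges starting at $v_k$, $-1$ at edges ending at $v_k$, $0$ otherwise). For colors $j = 1, \ldots, C$ let $e'_j \in \mathbb{R}^C$ be the standard unit vectors and define $p_{j,k} = e'_j \otimes \chi_k \in \mathbb{R}^{CN}$ (Kronecker product). Then for $(j,k) \neq (j',k')$: $\|p_{j,k} - p_{j',k'}\|_2 = \sqrt{2n}$ if $j \neq j'$, $\|p_{j,k} - p_{j',k'}\|_2 = \sqrt{2n}$ if $j = j'$ and there is no edge between $v_k$ and $v_{k'}$, and $\|p_{j,k} - p_{j',k'}\|_2 = \sqrt{2n+2}$ if $j = j'$ and there is an edge between $v_k$ and $v_{k'}$. -/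
/-- Distances between the Kronecker vectors `p_{j,k} = e'_j ⊗ χ_k`
in the coloring reduction. -/
theorem stmt_1 (M N n C : ℕ) (s t : Fin N → Fin M)
    (hloop : ∀ e, s e ≠ t e)
    (hsimple : ∀ e e', e ≠ e' →
      ¬((s e = s e' ∧ t e = t e') ∨ (s e = t e' ∧ t e = s e')))
    (hdeg : ∀ v : Fin M,
      (Finset.univ.filter (fun e : Fin N => s e = v ∨ t e = v)).card = n)
    (χ : Fin M → Fin N → ℝ)
    (hχ : ∀ k j, χ k j = if s j = k then 1 else if t j = k then -1 else 0)
    (Adj : Fin M → Fin M → Prop)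
    (hAdj : ∀ k k', Adj k k' ↔
      ∃ e, (s e = k ∧ t e = k') ∨ (s e = k' ∧ t e = k))
    (p : Fin C → Fin M → EuclideanSpace ℝ (Fin C × Fin N))
    (hp : ∀ j k x, p j k x = (if x.1 = j then (1:ℝ) else 0) * χ k x.2) :
    ∀ (j j' : Fin C) (k k' : Fin M), (j, k) ≠ (j', k') →
      ((j ≠ j' → ‖p j k - p j' k'‖ = Real.sqrt (2 * n)) ∧
       (j = j' → ¬Adj k k' → ‖p j k - p j' k'‖ = Real.sqrt (2 * n)) ∧
       (j = j' → Adj k k' → ‖p j k - p j' k'‖ = Real.sqrt (2 * n + 2))) := by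
  classical
  have hsq : ∀ k : Fin M, ∑ e : Fin N, (χ k e)^2 = (n : ℝ) := by
    intro k
    have h1 : ∀ e : Fin N, (χ k e)^2 = if s e = k ∨ t e = k then (1:ℝ) else 0 := by
      intro e
      rw [hχ]
      by_cases h1 : s e = k
      · simp [h1]
      · by_cases h2 : t e = k <;> simp [h1, h2]
    rw [Finset.sum_congr rfl fun e _ => h1 e, Finset.sum_boole]
    rw [show (Finset.univ.filter (fun e : Fin N => s e = k ∨ t e = k)).card = n from hdeg k]
  have hcross : ∀ k k' : Fin M, k ≠ k' →
      ∑ e : Fin N, χ k e * χ k' e = if Adj k k' then (-1 : ℝ) else 0 := by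
    intro k k' hkk
    have hterm : ∀ e : Fin N, χ k e * χ k' e =
        if (s e = k ∧ t e = k') ∨ (s e = k' ∧ t e = k) then (-1:ℝ) else 0 := by
      intro e
      have hl := hloop e
      rw [hχ, hχ]
      rcases eq_or_ne (s e) k with h1 | h1 <;>
      rcases eq_or_ne (t e) k with h2 | h2 <;>
      rcases eq_or_ne (s e) k' with h3 | h3 <;>
      rcases eq_or_ne (t e) k' with h4 | h4 <;>
      simp_all
    rw [Finset.sum_congr rfl fun e _ => hterm e]
    have hrw : ∀ e : Fin N,
        (if (s e = k ∧ t e = k') ∨ (s e = k' ∧ t e = k) then (-1:ℝ) else 0)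
        = -(if (s e = k ∧ t e = k') ∨ (s e = k' ∧ t e = k) then (1:ℝ) else 0) := by
      intro e; split <;> simp
    rw [Finset.sum_congr rfl fun e _ => hrw e, Finset.sum_neg_distrib, Finset.sum_boole]
    by_cases hA : Adj k k'
    · obtain ⟨e0, he0⟩ := (hAdj k k').mp hA
      have huniq : ∀ e : Fin N,
          ((s e = k ∧ t e = k') ∨ (s e = k' ∧ t e = k)) → e = e0 := by
        intro e he
        by_contra hne2
        apply hsimple e e0 hne2
        rcases he with ⟨h1, h2⟩ | ⟨h1, h2⟩ <;>
          rcases he0 with ⟨h3, h4⟩ | ⟨h3, h4⟩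
        · exact Or.inl ⟨h1.trans h3.symm, h2.trans h4.symm⟩
        · exact Or.inr ⟨h1.trans h4.symm, h2.trans h3.symm⟩
        · exact Or.inr ⟨h1.trans h4.symm, h2.trans h3.symm⟩
        · exact Or.inl ⟨h1.trans h3.symm, h2.trans h4.symm⟩
      have : (Finset.univ.filter (fun e : Fin N =>
          (s e = k ∧ t e = k') ∨ (s e = k' ∧ t e = k))) = {e0} := by
        ext e
        simp only [Finset.mem_filter, Finset.mem_univ, true_and, Finset.mem_singleton]
        constructor
        · exact huniq e
        · rintro rfl; exact he0
      rw [this]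
      simp [hA]
    · have : (Finset.univ.filter (fun e : Fin N =>
          (s e = k ∧ t e = k') ∨ (s e = k' ∧ t e = k))) = ∅ := by
        rw [Finset.filter_eq_empty_iff]
        intro e _ he
        exact hA ((hAdj k k').mpr ⟨e, he⟩)
      rw [this]
      simp [hA]
  have hnorm : ∀ (j j' : Fin C) (k k' : Fin M),
      ‖p j k - p j' k'‖ = Real.sqrt (∑ c : Fin C, ∑ e : Fin N,
        ((if c = j then (1:ℝ) else 0) * χ k e - (if c = j' then 1 else 0) * χ k' e)^2) := by
    intro j j' k k'
    rw [EuclideanSpace.norm_eq, Fintype.sum_prod_type]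
    congr 1
    apply Finset.sum_congr rfl
    intro c _
    apply Finset.sum_congr rfl
    intro e _
    rw [PiLp.sub_apply, hp, hp, Real.norm_eq_abs, sq_abs]
  have hinner : ∀ (j j' : Fin C) (k k' : Fin M) (c : Fin C),
      ∑ e : Fin N, ((if c = j then (1:ℝ) else 0) * χ k e - (if c = j' then 1 else 0) * χ k' e)^2
      = (if c = j then (n:ℝ) else 0) + (if c = j' then (n:ℝ) else 0)
        - (if c = j ∧ c = j' then 2 * ∑ e : Fin N, χ k e * χ k' e else 0) := by
    intro j j' k k' c
    by_cases h1 : c = j <;> by_cases h2 : c = j'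
    · rw [if_pos h1, if_pos h2, if_pos h1, if_pos h2, if_pos ⟨h1, h2⟩]
      have : ∀ e : Fin N, ((1:ℝ) * χ k e - 1 * χ k' e)^2
          = (χ k e)^2 + (χ k' e)^2 - 2 * (χ k e * χ k' e) := fun e => by ring
      rw [Finset.sum_congr rfl fun e _ => this e, Finset.sum_sub_distrib,
        Finset.sum_add_distrib, hsq, hsq, ← Finset.mul_sum]
    · rw [if_pos h1, if_neg h2, if_pos h1, if_neg h2,
        if_neg (fun h : c = j ∧ c = j' => h2 h.2)]
      have : ∀ e : Fin N, ((1:ℝ) * χ k e - 0 * χ k' e)^2 = (χ k e)^2 :=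
        fun e => by ring
      rw [Finset.sum_congr rfl fun e _ => this e, hsq]; ring
    · rw [if_neg h1, if_pos h2, if_neg h1, if_pos h2,
        if_neg (fun h : c = j ∧ c = j' => h1 h.1)]
      have : ∀ e : Fin N, ((0:ℝ) * χ k e - 1 * χ k' e)^2 = (χ k' e)^2 :=
        fun e => by ring
      rw [Finset.sum_congr rfl fun e _ => this e, hsq]; ring
    · rw [if_neg h1, if_neg h2, if_neg h1, if_neg h2,
        if_neg (fun h : c = j ∧ c = j' => h1 h.1)]
      simp
  intro j j' k k' hne
  refine ⟨?_, ?_, ?_⟩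
  · intro hjj
    rw [hnorm]
    congr 1
    rw [Finset.sum_congr rfl fun c _ => hinner j j' k k' c]
    have hno : ∀ c : Fin C, ¬(c = j ∧ c = j') := by
      rintro c ⟨rfl, rfl⟩; exact hjj rfl
    simp only [hno, if_false]
    rw [Finset.sum_sub_distrib, Finset.sum_add_distrib]
    simp [Finset.sum_ite_eq']
    ring
  · intro hjj hA
    subst hjj
    have hkk : k ≠ k' := by
      intro h; exact hne (by rw [h])
    rw [hnorm]
    congr 1
    rw [Finset.sum_congr rfl fun c _ => hinner j j k k' c]
    rw [hcross k k' hkk]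
    simp only [if_neg hA, and_self, mul_zero]
    rw [Finset.sum_sub_distrib, Finset.sum_add_distrib]
    simp [Finset.sum_ite_eq']
    ring
  · intro hjj hA
    subst hjj
    have hkk : k ≠ k' := by
      intro h; exact hne (by rw [h])
    rw [hnorm]
    congr 1
    rw [Finset.sum_congr rfl fun c _ => hinner j j k k' c]
    rw [hcross k k' hkk]
    simp only [if_pos hA, and_self]
    rw [Finset.sum_sub_distrib, Finset.sum_add_distrib]
    simp [Finset.sum_ite_eq']
    ring
end

section
/- Let $(P, d_P)$ and $(Q, d_Q)$ be metric spaces with points $p_1,\ldots,p_N \in P$ and $q_1,\ldots,q_M \in Q$, and let $m = \min_{i \neq i'} d_Q(q_i, q_{i'}) > 0$. Let $J \subseteq \{1,\ldots,M\} \times \{1,\ldots,N\}$ satisfy the Lipschitz condition with parameter $\kappa$: $d_P(p_j, p_{j'}) \leq \kappa\, d_Q(q_i, q_{i'})$ for all $(i,j),(i',j') \in J$. Let $\tilde{J}$ be a uniform $\varepsilon_u$-perturbation of $J$, meaning: for every $(i,j) \in \tilde{J}$ there exists $j'$ with $(i,j') \in J$ and $d_P(p_j, p_{j'}) \leq \varepsilon_u$.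 Then $\tilde{J}$ satisfies the Lipschitz condition with parameter $\kappa + 2\varepsilon_u/m$, i.e., $d_P(p_j, p_{j'}) \leq (\kappa + 2\varepsilon_u/m)\, d_Q(q_i, q_{i'})$ for all $(i,j),(i',j') \in \tilde{J}$ with $i \neq i'$. -/
/-- A uniform `ε_u`-perturbation of a pattern satisfying the
Lipschitz condition with parameter `κ` satisfies it with parameter
`κ + 2ε_u/m`, where `m > 0` is the minimal distance between measurement
points. -/
theorem stmt_2 {P Q : Type*} [MetricSpace P] [MetricSpace Q]
    (N M : ℕ) (p : Fin N → P) (q : Fin M → Q)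
    (m : ℝ) (hm : 0 < m)
    (hmin : ∀ i i' : Fin M, i ≠ i' → m ≤ dist (q i) (q i'))
    (κ εu : ℝ) (hεu : 0 < εu)
    (J Jt : Set (Fin M × Fin N))
    (hLip : ∀ i j i' j', (i, j) ∈ J → (i', j') ∈ J →
      dist (p j) (p j') ≤ κ * dist (q i) (q i'))
    (hpert : ∀ i j, (i, j) ∈ Jt → ∃ j', (i, j') ∈ J ∧ dist (p j) (p j') ≤ εu) :
    ∀ i j i' j', (i, j) ∈ Jt → (i', j') ∈ Jt → i ≠ i' →
      dist (p j) (p j') ≤ (κ + 2 * εu / m) * dist (q i) (q i') := by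
  intro i j i' j' hj hj' hii'
  obtain ⟨j1, hj1, hd1⟩ := hpert i j hj
  obtain ⟨j1', hj1', hd1'⟩ := hpert i' j' hj'
  have hmd := hmin i i' hii'
  have hLip' := hLip i j1 i' j1' hj1 hj1'
  have htri : dist (p j) (p j') ≤ εu + κ * dist (q i) (q i') + εu := by
    calc dist (p j) (p j') ≤ dist (p j) (p j1) + dist (p j1) (p j1') + dist (p j1') (p j') :=
          dist_triangle4 _ _ _ _
      _ ≤ εu + κ * dist (q i) (q i') + εu := by
          rw [dist_comm (p j1') (p j')]; gcongr
  have h2 : 2 * εu ≤ 2 * εu / m * dist (q i) (q i') := by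
    rw [div_mul_eq_mul_div, le_div_iff₀ hm]
    nlinarith
  nlinarith
end

section
/- Consider $M$ independent Bernoulli trials where each trial fails (is removed) with probability $\varepsilon_B \in [0,1]$. The probability that there is no run of $k$ or more consecutive failures among the $M$ trials is at least $(1 - \varepsilon_B^k)^{M-k+1}$. -/
/-!
Write `N n` for the event that the first `n` trials contain no run of `k` failures and `R j` for
the event of a run of `k` failures occupying the trials `j, …, j + k - 1`. Then
`N (m + k + 1) = N (m + k) \ R (m + 1)`, and on `N (m + k) ∩ R (m + 1)` trial `m` must be a
success, so this intersection lies in `(N m ∩ {trial m succeeds}) ∩ R (m + 1)`. The two factors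
depend on the disjoint trial sets `[0, m]` and `(m, m + k]`, so by independence its probability is
at most `P (N m ∩ {trial m succeeds}) * ε ^ k ≤ P (N (m + k)) * ε ^ k`. Hence
`P (N (m + k + 1)) ≥ (1 - ε ^ k) * P (N (m + k))`, and induction from `P (N k) = 1 - ε ^ k` gives
the bound.
-/

open MeasureTheory ProbabilityTheory MeasurableSpace
open scoped ENNReal

namespace FailureRun

variable {Ω : Type*} (A : ℕ → Set Ω) (k : ℕ)

def runAt (j : ℕ) : Set Ω := ⋂ r, ⋂ (_ : r < k), A (j + r)

def noRunWithin (n : ℕ) : Set Ω := ⋂ i, ⋂ (_ : i + k ≤ n), (runAt A k i)ᶜ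

variable {A k}

lemma mem_runAt {ω : Ω} {j : ℕ} : ω ∈ runAt A k j ↔ ∀ r < k, ω ∈ A (j + r) := by
  simp [runAt]

lemma mem_noRunWithin {ω : Ω} {n : ℕ} :
    ω ∈ noRunWithin A k n ↔ ¬∃ i, i + k ≤ n ∧ ω ∈ runAt A k i := by
  simp [noRunWithin]

lemma noRunWithin_self : noRunWithin A k k = (runAt A k 0)ᶜ := by
  ext ω
  simp only [mem_noRunWithin, Set.mem_compl_iff]
  refine ⟨fun h h0 => h ⟨0, by omega, h0⟩, fun h ⟨i, hi, hrun⟩ => h ?_⟩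
  rwa [show i = 0 by omega] at hrun

lemma noRunWithin_add_one (m : ℕ) :
    noRunWithin A k (m + k + 1) = noRunWithin A k (m + k) \ runAt A k (m + 1) := by
  ext ω
  simp only [mem_noRunWithin, Set.mem_sdiff]
  constructor
  · intro h
    exact ⟨fun ⟨i, hi, hrun⟩ => h ⟨i, by omega, hrun⟩, fun hrun => h ⟨m + 1, by omega, hrun⟩⟩
  · rintro ⟨hm, hlast⟩ ⟨i, hi, hrun⟩
    rcases Nat.lt_or_ge (m + k) (i + k) with hlt | hle
    · exact hlast (by rwa [show i = m + 1 by omega] at hrun)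
    · exact hm ⟨i, hle, hrun⟩

lemma noRunWithin_inter_compl_subset (m : ℕ) :
    noRunWithin A k m ∩ (A m)ᶜ ⊆ noRunWithin A k (m + k) := by
  rintro ω ⟨hm, hsucc⟩
  rw [mem_noRunWithin] at hm ⊢
  rintro ⟨i, hi, hrun⟩
  rcases Nat.lt_or_ge m (i + k) with hlt | hle
  · have := mem_runAt.1 hrun (m - i) (by omega)
    exact hsucc (by rwa [show i + (m - i) = m by omega] at this)
  · exact hm ⟨i, hle, hrun⟩

lemma noRunWithin_inter_runAt_subset (m : ℕ) :
    noRunWithin A k (m + k) ∩ runAt A k (m + 1)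
      ⊆ noRunWithin A k m ∩ (A m)ᶜ ∩ runAt A k (m + 1) := by
  rintro ω ⟨hm, hnext⟩
  rw [mem_noRunWithin] at hm
  refine ⟨⟨mem_noRunWithin.2 fun ⟨i, hi, hrun⟩ => hm ⟨i, by omega, hrun⟩,
    fun hfail => hm ⟨m, le_rfl, mem_runAt.2 fun r hr => ?_⟩⟩, hnext⟩
  rcases r with _ | r
  · exact hfail
  · simpa [add_assoc, add_comm 1 r] using mem_runAt.1 hnext r (by omega)

lemma measurableSet_runAt {S : Set ℕ} {j : ℕ} (hS : ∀ r < k, j + r ∈ S) :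
    MeasurableSet[generateFrom {t | ∃ n ∈ S, A n = t}] (runAt A k j) :=
  .iInter fun r => .iInter fun hr => measurableSet_generateFrom ⟨_, hS r hr, rfl⟩

lemma measurableSet_noRunWithin {S : Set ℕ} {n : ℕ} (hS : ∀ i < n, i ∈ S) :
    MeasurableSet[generateFrom {t | ∃ n ∈ S, A n = t}] (noRunWithin A k n) :=
  .iInter fun _ => .iInter fun hi => (measurableSet_runAt fun _ _ => hS _ (by omega)).compl

section Probability

variable [MeasurableSpace Ω] {μ : Measure Ω} {ε : ℝ≥0∞}

lemma measurableSet_runAt_of_measurable (hA : ∀ i, MeasurableSet (A i)) (j : ℕ) :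
    MeasurableSet (runAt A k j) :=
  generateFrom_le (by rintro _ ⟨n, -, rfl⟩; exact hA n) _
    (measurableSet_runAt (S := Set.univ) fun _ _ => trivial)

lemma measure_runAt (hA : iIndepSet A μ) (hε : ∀ i, μ (A i) = ε) (j : ℕ) :
    μ (runAt A k j) = ε ^ k := by
  have hrun : runAt A k j = ⋂ i ∈ Finset.image (j + ·) (Finset.range k), A i := by
    ext ω
    simp [mem_runAt]
  rw [hrun, hA.meas_biInter, Finset.prod_image fun _ _ _ _ h => by omega]
  simp [hε]

lemma measure_noRunWithin_inter_runAt_le (hAm : ∀ i, MeasurableSet (A i))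
    (hA : iIndepSet A μ) (hε : ∀ i, μ (A i) = ε) (m : ℕ) :
    μ (noRunWithin A k (m + k) ∩ runAt A k (m + 1)) ≤ ε ^ k * μ (noRunWithin A k (m + k)) := by
  have hindep := hA.indep_generateFrom_of_disjoint hAm (Set.Iic m) (Set.Ioi m)
    (Set.Iic_disjoint_Ioi le_rfl)
  have hpast : MeasurableSet[generateFrom {t | ∃ n ∈ Set.Iic m, A n = t}]
      (noRunWithin A k m ∩ (A m)ᶜ) :=
    (measurableSet_noRunWithin fun i hi => Set.mem_Iic.2 hi.le).inter
      (measurableSet_generateFrom (s := {t | ∃ n ∈ Set.Iic m, A n = t})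
        ⟨m, Set.mem_Iic.2 le_rfl, rfl⟩).compl
  have hfuture : MeasurableSet[generateFrom {t | ∃ n ∈ Set.Ioi m, A n = t}]
      (runAt A k (m + 1)) :=
    measurableSet_runAt fun r _ => Set.mem_Ioi.2 (by omega)
  calc μ (noRunWithin A k (m + k) ∩ runAt A k (m + 1))
      ≤ μ (noRunWithin A k m ∩ (A m)ᶜ ∩ runAt A k (m + 1)) :=
        measure_mono (noRunWithin_inter_runAt_subset m)
    _ = μ (noRunWithin A k m ∩ (A m)ᶜ) * ε ^ k := by
        rw [(Indep_iff _ _ μ).1 hindep _ _ hpast hfuture, measure_runAt hA hε]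
    _ ≤ μ (noRunWithin A k (m + k)) * ε ^ k := by
        gcongr
        exact noRunWithin_inter_compl_subset m
    _ = ε ^ k * μ (noRunWithin A k (m + k)) := mul_comm _ _

lemma one_sub_pow_mul_measure_noRunWithin_le (hAm : ∀ i, MeasurableSet (A i))
    (hA : iIndepSet A μ) (hε : ∀ i, μ (A i) = ε) (m : ℕ) :
    (1 - ε ^ k) * μ (noRunWithin A k (m + k)) ≤ μ (noRunWithin A k (m + k + 1)) := by
  have := hA.isProbabilityMeasure
  rw [ENNReal.sub_mul fun _ _ => measure_ne_top _ _, one_mul, tsub_le_iff_left]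
  calc μ (noRunWithin A k (m + k))
      = μ (noRunWithin A k (m + k) ∩ runAt A k (m + 1))
          + μ (noRunWithin A k (m + k) \ runAt A k (m + 1)) :=
        (measure_inter_add_sdiff _ (measurableSet_runAt_of_measurable hAm _)).symm
    _ ≤ ε ^ k * μ (noRunWithin A k (m + k)) + μ (noRunWithin A k (m + k + 1)) := by
        rw [noRunWithin_add_one]
        gcongr
        exact measure_noRunWithin_inter_runAt_le hAm hA hε m

theorem one_sub_pow_le_measure_noRunWithin (hAm : ∀ i, MeasurableSet (A i))
    (hA : iIndepSet A μ) (hε : ∀ i, μ (A i) = ε) (m : ℕ) :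
    (1 - ε ^ k) ^ (m + 1) ≤ μ (noRunWithin A k (m + k)) := by
  have := hA.isProbabilityMeasure
  induction m with
  | zero =>
    rw [zero_add, zero_add, pow_one, noRunWithin_self,
      prob_compl_eq_one_sub (measurableSet_runAt_of_measurable hAm 0), measure_runAt hA hε]
  | succ m ih =>
    calc (1 - ε ^ k) ^ (m + 1 + 1)
        = (1 - ε ^ k) * (1 - ε ^ k) ^ (m + 1) := pow_succ' _ _
      _ ≤ (1 - ε ^ k) * μ (noRunWithin A k (m + k)) := by gcongr
      _ ≤ μ (noRunWithin A k (m + 1 + k)) := by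
        rw [add_right_comm]
        exact one_sub_pow_mul_measure_noRunWithin_le hAm hA hε m

end Probability

end FailureRun

theorem stmt_4_general {Ω : Type*} [MeasurableSpace Ω] (μ : Measure Ω)
    (M k : ℕ) (hkM : k ≤ M)
    (εB : ℝ) (hεB0 : 0 ≤ εB) (hεB1 : εB ≤ 1)
    (X : ℕ → Ω → Bool)
    (hmeas : ∀ i, Measurable (X i))
    (hindep : iIndepFun X μ)
    (hfail : ∀ i, μ {ω | X i ω = false} = ENNReal.ofReal εB) :
    ENNReal.ofReal ((1 - εB ^ k) ^ (M - k + 1)) ≤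
      μ {ω | ¬∃ i : ℕ, i + k ≤ M ∧ ∀ r < k, X (i + r) ω = false} := by
  have hAm : ∀ i, MeasurableSet {ω | X i ω = false} :=
    fun i => hmeas i (measurableSet_singleton _)
  have hA : iIndepSet (fun i => {ω | X i ω = false}) μ :=
    hindep.iIndep.iIndepSets'.iIndepSet_of_mem
      (π := fun i => {s | MeasurableSet[.comap (X i) inferInstance] s})
      (fun _ => ⟨{false}, measurableSet_singleton _, rfl⟩) hAm
  have hevent : {ω | ¬∃ i : ℕ, i + k ≤ M ∧ ∀ r < k, X (i + r) ω = false}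
      = FailureRun.noRunWithin (fun i => {ω | X i ω = false}) k (M - k + k) := by
    ext ω
    simp [FailureRun.mem_noRunWithin, FailureRun.mem_runAt, Nat.sub_add_cancel hkM]
  rw [hevent, ENNReal.ofReal_pow (sub_nonneg.2 (pow_le_one₀ hεB0 hεB1)),
    ENNReal.ofReal_sub _ (pow_nonneg hεB0 k), ENNReal.ofReal_one, ENNReal.ofReal_pow hεB0]
  exact FailureRun.one_sub_pow_le_measure_noRunWithin hAm hA hfail (M - k)

/-- For `M` independent Bernoulli trials, each failing with
probability `ε_B`, the probability that there is no run of `k` consecutive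
failures among the first `M` trials is at least `(1 - ε_B^k)^(M-k+1)`. -/
theorem stmt_4 {Ω : Type*} [MeasurableSpace Ω] (μ : Measure Ω)
    [IsProbabilityMeasure μ]
    (M k : ℕ) (hk : 0 < k) (hkM : k ≤ M)
    (εB : ℝ) (hεB0 : 0 ≤ εB) (hεB1 : εB ≤ 1)
    (X : ℕ → Ω → Bool)
    (hmeas : ∀ i, Measurable (X i))
    (hindep : iIndepFun X μ)
    (hfail : ∀ i, μ {ω | X i ω = false} = ENNReal.ofReal εB) :
    ENNReal.ofReal ((1 - εB ^ k) ^ (M - k + 1)) ≤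
      μ {ω | ¬∃ i : ℕ, i + k ≤ M ∧ ∀ r < k, X (i + r) ω = false} :=
  stmt_4_general μ M k hkM εB hεB0 hεB1 X hmeas hindep hfail
end

section
/- If a graph $G$ (with $M$ vertices, each of degree exactly $n$, built from the coloring reduction) admits a proper $C$-coloring, then the index set $J = \{((j_i, i), i) : i = 1, \ldots, M\}$, where $j_i$ is the color of vertex $v_i$, satisfies the Lipschitz condition $\|p_{j,k} - p_{j',k'}\|_2 \leq \sqrt{n}\, \|q_i - q_{i'}\|_2$ for all pairs of elements of $J$ with distinct columns, where $q_i = e_i \in \mathbb{R}^M$ and $p_{j,k} = e'_j \otimes \chi_k$ as in the reduction. -/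
/-- If the graph of the coloring reduction admits a proper
`C`-coloring `col`, then the index set `{((col i, i), i)}` satisfies the
Lipschitz condition `‖p_{j,k} - p_{j',k'}‖ ≤ √n · ‖q_i - q_{i'}‖` for all
pairs with distinct columns. -/
theorem stmt_13 (M N n Cc : ℕ) (s t : Fin N → Fin M)
    (hloop : ∀ e, s e ≠ t e)
    (hsimple : ∀ e e', e ≠ e' →
      ¬((s e = s e' ∧ t e = t e') ∨ (s e = t e' ∧ t e = s e')))
    (hdeg : ∀ v : Fin M,
      (Finset.univ.filter (fun e : Fin N => s e = v ∨ t e = v)).card = n)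
    (χ : Fin M → Fin N → ℝ)
    (hχ : ∀ k j, χ k j = if s j = k then 1 else if t j = k then -1 else 0)
    (Adj : Fin M → Fin M → Prop)
    (hAdj : ∀ k k', Adj k k' ↔
      ∃ e, (s e = k ∧ t e = k') ∨ (s e = k' ∧ t e = k))
    (p : Fin Cc → Fin M → EuclideanSpace ℝ (Fin Cc × Fin N))
    (hp : ∀ j k x, p j k x = (if x.1 = j then (1:ℝ) else 0) * χ k x.2)
    (q : Fin M → EuclideanSpace ℝ (Fin M))
    (hq : ∀ i x, q i x = if x = i then (1:ℝ) else 0)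
    (col : Fin M → Fin Cc)
    (hcol : ∀ i i', Adj i i' → col i ≠ col i') :
    ∀ i i' : Fin M, i ≠ i' →
      ‖p (col i) i - p (col i') i'‖ ≤ Real.sqrt n * ‖q i - q i'‖ := by
  intro i i' hii
  -- norm of q i - q i'
  have hqn : ‖q i - q i'‖ = Real.sqrt 2 := by
    rw [EuclideanSpace.norm_eq]
    congr 1
    have h1 : ∀ x : Fin M, ‖(q i - q i') x‖ ^ 2
        = (if x = i then (1:ℝ) else 0) + (if x = i' then 1 else 0) := by
      intro x
      simp only [PiLp.sub_apply, hq, Real.norm_eq_abs, sq_abs]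
      rcases eq_or_ne x i with h | h <;> rcases eq_or_ne x i' with h' | h'
      · exact absurd (h.symm.trans h') hii
      · simp [h, h', hii]
      · simp [h, h', Ne.symm hii]
      · simp [h, h']
    rw [Finset.sum_congr rfl fun x _ => h1 x, Finset.sum_add_distrib,
      Finset.sum_ite_eq' _ i, Finset.sum_ite_eq' _ i']
    norm_num
  -- sum of squares of χ k equals n
  have hchisq : ∀ k : Fin M, ∑ e : Fin N, (χ k e) ^ 2 = (n : ℝ) := by
    intro k
    have h1 : ∀ e : Fin N, (χ k e) ^ 2 = if s e = k ∨ t e = k then (1:ℝ) else 0 := by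
      intro e
      rw [hχ]
      rcases eq_or_ne (s e) k with h | h <;> rcases eq_or_ne (t e) k with h' | h' <;>
        simp [h, h']
    rw [Finset.sum_congr rfl fun e _ => h1 e, Finset.sum_boole, hdeg]
  -- pointwise form of the difference
  have hform : ∀ x : Fin Cc × Fin N, ‖(p (col i) i - p (col i') i') x‖ ^ 2
      = ((if x.1 = col i then (1:ℝ) else 0) * χ i x.2
          - (if x.1 = col i' then 1 else 0) * χ i' x.2) ^ 2 := by
    intro x
    simp [PiLp.sub_apply, hp, Real.norm_eq_abs, sq_abs]
  -- inner column sums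
  have hinner : ∀ e : Fin N, ∑ c : Fin Cc,
      ((if c = col i then (1:ℝ) else 0) * χ i e
        - (if c = col i' then 1 else 0) * χ i' e) ^ 2
      = (χ i e) ^ 2 + (χ i' e) ^ 2 := by
    intro e
    rcases eq_or_ne (col i) (col i') with hjj | hjj
    · -- same color: vertices not adjacent, so χ i e * χ i' e = 0
      have hna : ¬ Adj i i' := fun h => hcol i i' h hjj
      have hz : χ i e * χ i' e = 0 := by
        rw [hχ, hχ]
        rcases eq_or_ne (s e) i with h1 | h1
        · rw [if_pos h1, one_mul,
            if_neg (fun h3 => hii (h1.symm.trans h3)),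
            if_neg (fun h4 => hna ((hAdj i i').mpr ⟨e, Or.inl ⟨h1, h4⟩⟩))]
        · rw [if_neg h1]
          rcases eq_or_ne (t e) i with h2 | h2
          · rw [if_pos h2,
              if_neg (fun h3 => hna ((hAdj i i').mpr ⟨e, Or.inr ⟨h3, h2⟩⟩)),
              if_neg (fun h4 => hii (h2.symm.trans h4))]
            ring
          · rw [if_neg h2, zero_mul]
      have h1 : ∀ c : Fin Cc, ((if c = col i then (1:ℝ) else 0) * χ i e
          - (if c = col i' then 1 else 0) * χ i' e) ^ 2
          = if c = col i then ((χ i e) ^ 2 + (χ i' e) ^ 2) else 0 := by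
        intro c
        rw [← hjj]
        rcases eq_or_ne c (col i) with h | h
        · simp only [if_pos h, one_mul]
          have : (χ i e - χ i' e) ^ 2
              = χ i e ^ 2 + χ i' e ^ 2 - 2 * (χ i e * χ i' e) := by ring
          rw [this, hz]; ring
        · simp only [if_neg h]; ring
      rw [Finset.sum_congr rfl fun c _ => h1 c, Finset.sum_ite_eq' _ (col i)]
      simp
    · have h1 : ∀ c : Fin Cc, ((if c = col i then (1:ℝ) else 0) * χ i e
          - (if c = col i' then 1 else 0) * χ i' e) ^ 2
          = (if c = col i then (χ i e) ^ 2 else 0)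
            + (if c = col i' then (χ i' e) ^ 2 else 0) := by
        intro c
        rcases eq_or_ne c (col i) with h | h <;> rcases eq_or_ne c (col i') with h' | h'
        · exact absurd (h.symm.trans h') hjj
        · simp only [if_pos h, if_neg h']; ring
        · simp only [if_neg h, if_pos h']; ring
        · simp only [if_neg h, if_neg h']; ring
      rw [Finset.sum_congr rfl fun c _ => h1 c, Finset.sum_add_distrib,
        Finset.sum_ite_eq' _ (col i), Finset.sum_ite_eq' _ (col i')]
      simp
  have key : ∑ x : Fin Cc × Fin N, ‖(p (col i) i - p (col i') i') x‖ ^ 2 = (n : ℝ) * 2 := by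
    have hms : ∑ x : Fin Cc × Fin N, ‖(p (col i) i - p (col i') i') x‖ ^ 2
        = ∑ e : Fin N, ∑ c : Fin Cc,
          ((if c = col i then (1:ℝ) else 0) * χ i e
            - (if c = col i' then 1 else 0) * χ i' e) ^ 2 := by
      rw [Finset.sum_congr rfl fun x _ => hform x, Fintype.sum_prod_type_right]
    rw [hms, Finset.sum_congr rfl fun e _ => hinner e, Finset.sum_add_distrib,
      hchisq, hchisq]
    ring
  rw [EuclideanSpace.norm_eq, key, hqn, Real.sqrt_mul (by positivity)]
end

section
/- Conversely, in the coloring-reduction setup, if $J = \{((j_i, i), i) : i = 1, \ldots, M\}$ (one element per column, with row index $(j_i, i)$) satisfies $\|p_{j_i, i} - p_{j_{i'}, i'}\|_2 \leq \sqrt{n} \cdot \sqrt{2}$ for all $i \neq i'$, then the assignment $v_i \mapsto j_i$ is a proper coloring of $G$: adjacent vertices receive different colors. -/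
/-- Conversely, in the coloring reduction, if the assignment
`v_i ↦ col i` gives an index set `{((col i, i), i)}` satisfying
`‖p_{col i, i} - p_{col i', i'}‖ ≤ √n · √2` for all `i ≠ i'`, then `col` is a
proper coloring: adjacent vertices receive different colors. -/
theorem stmt_14 (M N n Cc : ℕ) (s t : Fin N → Fin M)
    (hloop : ∀ e, s e ≠ t e)
    (hsimple : ∀ e e', e ≠ e' →
      ¬((s e = s e' ∧ t e = t e') ∨ (s e = t e' ∧ t e = s e')))
    (hdeg : ∀ v : Fin M,
      (Finset.univ.filter (fun e : Fin N => s e = v ∨ t e = v)).card = n)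
    (χ : Fin M → Fin N → ℝ)
    (hχ : ∀ k j, χ k j = if s j = k then 1 else if t j = k then -1 else 0)
    (Adj : Fin M → Fin M → Prop)
    (hAdj : ∀ k k', Adj k k' ↔
      ∃ e, (s e = k ∧ t e = k') ∨ (s e = k' ∧ t e = k))
    (p : Fin Cc → Fin M → EuclideanSpace ℝ (Fin Cc × Fin N))
    (hp : ∀ j k x, p j k x = (if x.1 = j then (1:ℝ) else 0) * χ k x.2)
    (col : Fin M → Fin Cc)
    (hLip : ∀ i i' : Fin M, i ≠ i' →
      ‖p (col i) i - p (col i') i'‖ ≤ Real.sqrt n * Real.sqrt 2) :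
    ∀ i i' : Fin M, Adj i i' → col i ≠ col i' := by
  intro i i' hadj hcol
  obtain ⟨e0, he0⟩ := (hAdj i i').mp hadj
  have hne : i ≠ i' := by
    rintro rfl
    rcases he0 with ⟨h1, h2⟩ | ⟨h1, h2⟩ <;> exact hloop e0 (h1.trans h2.symm)
  -- squared sum lemma for degree
  have hsq : ∀ k : Fin M, ∑ e : Fin N, (χ k e) ^ 2 = (n : ℝ) := by
    intro k
    have h1 : ∀ e : Fin N, (χ k e) ^ 2 = if (s e = k ∨ t e = k) then (1:ℝ) else 0 := by
      intro e
      rw [hχ]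
      by_cases h1 : s e = k
      · simp [h1]
      · by_cases h2 : t e = k <;> simp [h1, h2]
    simp only [h1, Finset.sum_boole]
    rw [hdeg k]
  -- cross term
  have hcross : ∑ e : Fin N, χ i e * χ i' e = (-1 : ℝ) := by
    have hptwise : ∀ e : Fin N, χ i e * χ i' e =
        if ((s e = i ∧ t e = i') ∨ (s e = i' ∧ t e = i)) then (-1:ℝ) else 0 := by
      intro e
      rw [hχ, hχ]
      by_cases h1 : s e = i
      · have h3 : ¬s e = i' := fun h => hne (h1.symm.trans h)
        by_cases h4 : t e = i' <;> simp [h1, h3, h4, hne, Ne.symm hne]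
      · by_cases h2 : t e = i
        · have h4 : ¬t e = i' := fun h => hne (h2.symm.trans h)
          by_cases h3 : s e = i' <;> simp [h1, h2, h3, h4, hne, Ne.symm hne]
        · simp [h1, h2, hne, Ne.symm hne]
    have hfilter : Finset.univ.filter
        (fun e : Fin N => (s e = i ∧ t e = i') ∨ (s e = i' ∧ t e = i)) = {e0} := by
      ext e
      simp only [Finset.mem_filter, Finset.mem_univ, true_and, Finset.mem_singleton]
      constructor
      · intro hP
        by_contra hne'
        apply hsimple e e0 hne'
        rcases hP with ⟨h1, h2⟩ | ⟨h1, h2⟩ <;> rcases he0 with ⟨h3, h4⟩ | ⟨h3, h4⟩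
        · exact Or.inl ⟨h1.trans h3.symm, h2.trans h4.symm⟩
        · exact Or.inr ⟨h1.trans h4.symm, h2.trans h3.symm⟩
        · exact Or.inr ⟨h1.trans h4.symm, h2.trans h3.symm⟩
        · exact Or.inl ⟨h1.trans h3.symm, h2.trans h4.symm⟩
      · rintro rfl; exact he0
    calc ∑ e : Fin N, χ i e * χ i' e
        = ∑ e : Fin N, ite ((s e = i ∧ t e = i') ∨ (s e = i' ∧ t e = i)) (-1:ℝ) 0 :=
          Finset.sum_congr rfl fun e _ => hptwise e
      _ = ∑ e ∈ Finset.univ.filter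
            (fun e : Fin N => (s e = i ∧ t e = i') ∨ (s e = i' ∧ t e = i)), (-1:ℝ) := by
          rw [Finset.sum_filter]
      _ = -1 := by rw [hfilter]; simp
  -- the sum of squares
  have hS : ∑ x : Fin Cc × Fin N, ((p (col i) i - p (col i) i') x) ^ 2
      = 2 * (n : ℝ) + 2 := by
    have hterm : ∀ x : Fin Cc × Fin N, ((p (col i) i - p (col i) i') x) ^ 2 =
        if x.1 = col i then (χ i x.2 - χ i' x.2) ^ 2 else 0 := by
      intro x
      have hx : (p (col i) i - p (col i) i') x = p (col i) i x - p (col i) i' x := rfl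
      rw [hx, hp, hp]
      split_ifs <;> ring
    rw [Finset.sum_congr rfl fun x _ => hterm x]
    rw [Fintype.sum_prod_type]
    have hcollapse : ∀ a : Fin Cc,
        (∑ e : Fin N, if a = col i then (χ i e - χ i' e) ^ 2 else 0)
        = if a = col i then (∑ e : Fin N, (χ i e - χ i' e) ^ 2) else 0 := by
      intro a; split_ifs <;> simp
    rw [Finset.sum_congr rfl fun a _ => hcollapse a,
      Finset.sum_ite_eq' Finset.univ (col i)]
    simp only [Finset.mem_univ, if_true]
    have expand : ∀ e : Fin N, (χ i e - χ i' e) ^ 2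
        = (χ i e)^2 + (χ i' e)^2 - 2 * (χ i e * χ i' e) := fun e => by ring
    rw [Finset.sum_congr rfl fun e _ => expand e]
    rw [Finset.sum_sub_distrib, Finset.sum_add_distrib, ← Finset.mul_sum,
      hsq, hsq, hcross]
    ring
  -- norm squared
  have hnormsq : ‖p (col i) i - p (col i) i'‖ ^ 2 = 2 * (n : ℝ) + 2 := by
    rw [EuclideanSpace.norm_eq, Real.sq_sqrt (by positivity)]
    rw [← hS]
    exact Finset.sum_congr rfl fun x _ => by rw [Real.norm_eq_abs, sq_abs]
  have hle := hLip i i' hne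
  rw [← hcol] at hle
  have hsq2 : ‖p (col i) i - p (col i) i'‖ ^ 2 ≤ (Real.sqrt n * Real.sqrt 2) ^ 2 := by
    have hnn := norm_nonneg (p (col i) i - p (col i) i')
    nlinarith
  rw [hnormsq, mul_pow, Real.sq_sqrt (by positivity), Real.sq_sqrt (by norm_num)] at hsq2
  linarith
end

section
/- Let $A \in \mathbb{C}^{T \times P}$ have unit-norm columns and Babel function $\mu_1$, and suppose $\mu_1(L) < 1 - \mu_1(L-1)$ for some $L \geq 1$. Then for any $L$-sparse $x$ with $\mathrm{supp}(x) = \Lambda$, $|\Lambda| \leq L$, and $y = Ax \neq 0$, the maximum of $|\langle a_j, y \rangle|$ over all columns is attained only at indices in $\Lambda$: $\max_{j \in \Lambda} |\langle a_j, y \rangle| > \max_{j \notin \Lambda} |\langle a_j, y \rangle|$. (This is the key step guaranteeing OMP selects a correct index in the noiseless case.) -/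
/-! Write `G = Aᴴ A` for the Gram matrix, so that the correlations are `Aᴴ y = G x`, and let
`i ∈ Λ` maximise `|x i|`. Since `G i i = 1`, the correlation at `i` is at least
`(1 - μ₁(L - 1)) |x i|`, while for `ω ∉ Λ` it is at most `μ₁(L) |x i|`; the exact recovery
condition separates the two bounds. -/

open Matrix Finset

lemma norm_sum_mul_le_of_norm_le {ι R : Type*} [SeminormedRing R] {s : Finset ι}
    {f g : ι → R} {M : ℝ} (hg : ∀ k ∈ s, ‖g k‖ ≤ M) :
    ‖∑ k ∈ s, f k * g k‖ ≤ (∑ k ∈ s, ‖f k‖) * M := by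
  rw [Finset.sum_mul]
  refine (norm_sum_le _ _).trans (Finset.sum_le_sum fun k hk => ?_)
  exact (norm_mul_le _ _).trans (mul_le_mul_of_nonneg_left (hg k hk) (norm_nonneg _))

lemma norm_sum_mul_ge_of_apply_self_eq_one {ι R : Type*} [SeminormedRing R] [DecidableEq ι]
    {s : Finset ι} {f g : ι → R} {i : ι} (hi : i ∈ s) (hf : f i = 1)
    (hg : ∀ k ∈ s, ‖g k‖ ≤ ‖g i‖) :
    (1 - ∑ k ∈ s.erase i, ‖f k‖) * ‖g i‖ ≤ ‖∑ k ∈ s, f k * g k‖ := by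
  have hrest : ‖∑ k ∈ s.erase i, f k * g k‖ ≤ (∑ k ∈ s.erase i, ‖f k‖) * ‖g i‖ :=
    norm_sum_mul_le_of_norm_le fun k hk => hg k (Finset.mem_of_mem_erase hk)
  have htri := norm_sub_norm_le (g i) (-∑ k ∈ s.erase i, f k * g k)
  rw [← Finset.add_sum_erase _ _ hi, hf, one_mul]
  rw [norm_neg, sub_neg_eq_add] at htri
  linarith

namespace Matrix

variable {𝕜 m n : Type*} [RCLike 𝕜]

lemma conjTranspose_mul_self_apply_self_eq_one [Fintype m] {A : Matrix m n 𝕜} {j : n}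
    (hj : ∑ t, ‖A t j‖ ^ 2 = 1) : (Aᴴ * A) j j = 1 := by
  simp only [mul_apply, conjTranspose_apply, RCLike.star_def, RCLike.conj_mul]
  exact_mod_cast hj

lemma mulVec_apply_eq_sum_of_support_subset [Fintype n] (G : Matrix m n 𝕜) {x : n → 𝕜}
    {Λ : Finset n} (hx : ∀ k ∉ Λ, x k = 0) (i : m) :
    (G *ᵥ x) i = ∑ k ∈ Λ, G i k * x k :=
  (Finset.sum_subset (Finset.subset_univ Λ) fun k _ hk => by simp [hx k hk]).symm

theorem exists_forall_norm_mulVec_lt_of_babel [Fintype n] [DecidableEq n] {G : Matrix n n 𝕜}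
    (hG : G.IsHermitian) (hdiag : ∀ j, G j j = 1) {μ : ℕ → ℝ}
    (hμ : ∀ l (Ω : Finset n) ω, Ω.card ≤ l → ω ∉ Ω → ∑ j ∈ Ω, ‖G j ω‖ ≤ μ l)
    {L : ℕ} (hERC : μ L < 1 - μ (L - 1)) {x : n → 𝕜} {Λ : Finset n}
    (hsupp : ∀ k ∉ Λ, x k = 0) (hx : x ≠ 0) (hcard : Λ.card ≤ L) :
    ∃ i ∈ Λ, ∀ ω ∉ Λ, ‖(G *ᵥ x) ω‖ < ‖(G *ᵥ x) i‖ := by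
  obtain ⟨k, hk⟩ := Function.ne_iff.1 hx
  have hkΛ : k ∈ Λ := by_contra fun h => hk (hsupp k h)
  obtain ⟨i, hi, hmax⟩ := Λ.exists_max_image (fun k => ‖x k‖) ⟨k, hkΛ⟩
  have hpos : 0 < ‖x i‖ := (norm_pos_iff.2 hk).trans_le (hmax k hkΛ)
  have hrow : ∀ a b, ‖G a b‖ = ‖G b a‖ := fun a b => by
    rw [← hG.apply a b, norm_star]
  refine ⟨i, hi, fun ω hω => ?_⟩
  rw [mulVec_apply_eq_sum_of_support_subset G hsupp, mulVec_apply_eq_sum_of_support_subset G hsupp]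
  have hoff : ∑ k ∈ Λ, ‖G ω k‖ ≤ μ L := by
    simpa only [hrow ω] using hμ L Λ ω hcard hω
  have hon : ∑ k ∈ Λ.erase i, ‖G i k‖ ≤ μ (L - 1) := by
    refine (Finset.sum_congr rfl fun k _ => hrow i k).trans_le
      (hμ _ _ i ?_ (Finset.notMem_erase i Λ))
    rw [Finset.card_erase_of_mem hi]
    omega
  calc ‖∑ k ∈ Λ, G ω k * x k‖ ≤ (∑ k ∈ Λ, ‖G ω k‖) * ‖x i‖ := norm_sum_mul_le_of_norm_le hmax
    _ ≤ μ L * ‖x i‖ := by gcongr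
    _ < (1 - μ (L - 1)) * ‖x i‖ := by gcongr
    _ ≤ (1 - ∑ k ∈ Λ.erase i, ‖G i k‖) * ‖x i‖ := by gcongr
    _ ≤ ‖∑ k ∈ Λ, G i k * x k‖ := norm_sum_mul_ge_of_apply_self_eq_one hi (hdiag i) hmax

end Matrix

theorem stmt_17_general (T P L : ℕ)
    (A : Matrix (Fin T) (Fin P) ℂ)
    (hnorm : ∀ j, ∑ t, ‖A t j‖ ^ 2 = 1)
    (μ₁ : ℕ → ℝ)
    (hμ₁ : ∀ l, IsGreatest
      {x : ℝ | ∃ (Ω : Finset (Fin P)) (ω : Fin P),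
        Ω.card ≤ l ∧ ω ∉ Ω ∧
        x = ∑ j ∈ Ω, ‖∑ t, (starRingEnd ℂ) (A t j) * A t ω‖} (μ₁ l))
    (hERC : μ₁ L < 1 - μ₁ (L - 1))
    (x : Fin P → ℂ) (Λ : Finset (Fin P))
    (hΛ : ∀ j, x j ≠ 0 ↔ j ∈ Λ) (hne : Λ.Nonempty) (hcard : Λ.card ≤ L)
    (y : Fin T → ℂ) (hy : y = A.mulVec x) :
    ∀ ω ∉ Λ,
      ‖∑ t, (starRingEnd ℂ) (A t ω) * y t‖ <
        Λ.sup' hne (fun j => ‖∑ t, (starRingEnd ℂ) (A t j) * y t‖) := by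
  intro ω hω
  have hx : x ≠ 0 := fun h => by
    obtain ⟨j, hj⟩ := hne
    exact (hΛ j).2 hj (by simp [h])
  obtain ⟨i, hi, hlt⟩ := exists_forall_norm_mulVec_lt_of_babel
    (isHermitian_conjTranspose_mul_self A)
    (fun j => conjTranspose_mul_self_apply_self_eq_one (hnorm j))
    (fun l Ω ω hΩ hω => (hμ₁ l).2 ⟨Ω, ω, hΩ, hω, rfl⟩) hERC
    (fun k hk => not_not.1 (mt (hΛ k).1 hk)) hx hcard
  have hcorr : ∀ j, ∑ t, (starRingEnd ℂ) (A t j) * y t = ((Aᴴ * A) *ᵥ x) j := fun j => by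
    rw [← mulVec_mulVec, ← hy]
    rfl
  simp only [hcorr]
  exact (hlt ω hω).trans_le (Finset.le_sup' (fun j => ‖((Aᴴ * A) *ᵥ x) j‖) hi)

/-- Tropp's exact recovery condition: if `μ₁(L) < 1 - μ₁(L-1)`,
then for any `L`-sparse `x` with support `Λ` and `y = Ax ≠ 0`, the maximal
correlation `|⟨a_j, y⟩|` over the support strictly dominates every correlation
outside the support. -/
theorem stmt_17 (T P L : ℕ) (hL : 1 ≤ L)
    (A : Matrix (Fin T) (Fin P) ℂ)
    (hnorm : ∀ j, ∑ t, ‖A t j‖ ^ 2 = 1)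
    (μ₁ : ℕ → ℝ)
    (hμ₁ : ∀ l, IsGreatest
      {x : ℝ | ∃ (Ω : Finset (Fin P)) (ω : Fin P),
        Ω.card ≤ l ∧ ω ∉ Ω ∧
        x = ∑ j ∈ Ω, ‖∑ t, (starRingEnd ℂ) (A t j) * A t ω‖} (μ₁ l))
    (hERC : μ₁ L < 1 - μ₁ (L - 1))
    (x : Fin P → ℂ) (Λ : Finset (Fin P))
    (hΛ : ∀ j, x j ≠ 0 ↔ j ∈ Λ) (hne : Λ.Nonempty) (hcard : Λ.card ≤ L)
    (y : Fin T → ℂ) (hy : y = A.mulVec x) (hy0 : y ≠ 0) :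
    ∀ ω ∉ Λ,
      ‖∑ t, (starRingEnd ℂ) (A t ω) * y t‖ <
        Λ.sup' hne (fun j => ‖∑ t, (starRingEnd ℂ) (A t j) * y t‖) :=
  stmt_17_general T P L A hnorm μ₁ hμ₁ hERC x Λ hΛ hne hcard y hy
end

section
/- With the weak selection rule: let $A$ have unit-norm columns, $\mu_1$ its Babel function, $0 < \lambda \leq 1$, and suppose $\mu_1(L) < \lambda(1 - \mu_1(L-1))$. Then for any nonzero $L$-sparse $x$ with support $\Lambda$ and $y = Ax$, any index $j$ satisfying $|\langle a_j, y\rangle| \geq \lambda \max_{j'} |\langle a_{j'}, y\rangle|$ must lie in $\Lambda$. -/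
/-!
Let `a` be an index of the support `Λ` where `|x|` is maximal, say `|x a| = M > 0`, and write
`G = Aᴴ A` for the Gram matrix, so that the correlations are `Aᴴ y = G x`. Off the support,
`|(G x) j| ≤ M μ₁(L)`; at `a`, the unit diagonal `G a a = 1` gives `|(G x) a| ≥ M (1 - μ₁(L-1))`.
A weakly selected `j ∉ Λ` would therefore satisfy `λ M (1 - μ₁(L-1)) ≤ M μ₁(L)`, contradicting
`μ₁(L) < λ (1 - μ₁(L-1))`.
-/

open Finset Matrix

section Gram

variable {𝕜 m n : Type*} [RCLike 𝕜] [Fintype m]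

lemma norm_gram_comm (A : Matrix m n 𝕜) (a b : n) : ‖(Aᴴ * A) a b‖ = ‖(Aᴴ * A) b a‖ := by
  rw [← (isHermitian_conjTranspose_mul_self A).apply a b, norm_star]

lemma gram_diag_eq_one {A : Matrix m n 𝕜} {k : n} (h : ∑ t, ‖A t k‖ ^ 2 = 1) :
    (Aᴴ * A) k k = 1 := by
  simp only [mul_apply, conjTranspose_apply, RCLike.star_def, RCLike.conj_mul]
  exact_mod_cast h

lemma conjTranspose_mulVec_mulVec_eq_sum [Fintype n] {A : Matrix m n 𝕜} {x : n → 𝕜} {Λ : Finset n}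
    (hx : ∀ k ∉ Λ, x k = 0) (a : n) :
    (Aᴴ *ᵥ (A *ᵥ x)) a = ∑ k ∈ Λ, (Aᴴ * A) a k * x k := by
  rw [mulVec_mulVec, mulVec, dotProduct]
  exact (sum_subset (subset_univ Λ) fun k _ hk => by rw [hx k hk, mul_zero]).symm

lemma norm_sum_gram_mul_le (A : Matrix m n 𝕜) {x : n → 𝕜} {Ω : Finset n} {M : ℝ}
    (hM : ∀ k ∈ Ω, ‖x k‖ ≤ M) (a : n) :
    ‖∑ k ∈ Ω, (Aᴴ * A) a k * x k‖ ≤ M * ∑ k ∈ Ω, ‖(Aᴴ * A) k a‖ := by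
  rw [mul_sum]
  refine (norm_sum_le _ _).trans (sum_le_sum fun k hk => ?_)
  rw [norm_mul, norm_gram_comm, mul_comm]
  exact mul_le_mul_of_nonneg_right (hM k hk) (norm_nonneg _)

lemma norm_conjTranspose_mulVec_mulVec_le [Fintype n] {A : Matrix m n 𝕜} {x : n → 𝕜} {Λ : Finset n}
    {M : ℝ} (hx : ∀ k ∉ Λ, x k = 0) (hM : ∀ k ∈ Λ, ‖x k‖ ≤ M) (a : n) :
    ‖(Aᴴ *ᵥ (A *ᵥ x)) a‖ ≤ M * ∑ k ∈ Λ, ‖(Aᴴ * A) k a‖ := by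
  rw [conjTranspose_mulVec_mulVec_eq_sum hx]
  exact norm_sum_gram_mul_le A hM a

lemma le_norm_conjTranspose_mulVec_mulVec [Fintype n] [DecidableEq n] {A : Matrix m n 𝕜} {x : n → 𝕜}
    {Λ : Finset n} {a : n} (hx : ∀ k ∉ Λ, x k = 0) (hmax : ∀ k ∈ Λ, ‖x k‖ ≤ ‖x a‖)
    (ha : a ∈ Λ) (hdiag : (Aᴴ * A) a a = 1) :
    ‖x a‖ * (1 - ∑ k ∈ Λ.erase a, ‖(Aᴴ * A) k a‖) ≤ ‖(Aᴴ *ᵥ (A *ᵥ x)) a‖ := by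
  rw [conjTranspose_mulVec_mulVec_eq_sum hx, ← add_sum_erase _ _ ha, hdiag, one_mul]
  have hrest := norm_sum_gram_mul_le A (Ω := Λ.erase a) (fun k hk => hmax k (mem_of_mem_erase hk)) a
  have htri := norm_le_norm_add_norm_sub' (x a) (x a + ∑ k ∈ Λ.erase a, (Aᴴ * A) a k * x k)
  rw [sub_add_cancel_left, norm_neg] at htri
  linarith

end Gram

theorem stmt_18_general (T P L : ℕ)
    (A : Matrix (Fin T) (Fin P) ℂ)
    (hnorm : ∀ j, ∑ t, ‖A t j‖ ^ 2 = 1)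
    (μ₁ : ℕ → ℝ)
    (hμ₁ : ∀ l, IsGreatest
      {x : ℝ | ∃ (Ω : Finset (Fin P)) (ω : Fin P),
        Ω.card ≤ l ∧ ω ∉ Ω ∧
        x = ∑ j ∈ Ω, ‖∑ t, (starRingEnd ℂ) (A t j) * A t ω‖} (μ₁ l))
    (lam : ℝ) (hlam0 : 0 < lam)
    (hERC : μ₁ L < lam * (1 - μ₁ (L - 1)))
    (x : Fin P → ℂ) (hx : x ≠ 0) (Λ : Finset (Fin P))
    (hΛ : ∀ j, x j ≠ 0 ↔ j ∈ Λ) (hcard : Λ.card ≤ L)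
    (y : Fin T → ℂ) (hy : y = A.mulVec x)
    (hP : (Finset.univ : Finset (Fin P)).Nonempty) :
    ∀ j : Fin P,
      lam * (Finset.univ.sup' hP
          (fun j' => ‖∑ t, (starRingEnd ℂ) (A t j') * y t‖)) ≤
        ‖∑ t, (starRingEnd ℂ) (A t j) * y t‖ →
      j ∈ Λ := by
  intro j hj
  by_contra hjΛ
  have hsupp : ∀ k ∉ Λ, x k = 0 := fun k hk => not_not.mp (mt (hΛ k).mp hk)
  have hbabel : ∀ l (Ω : Finset (Fin P)) ω, Ω.card ≤ l → ω ∉ Ω →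
      ∑ k ∈ Ω, ‖(Aᴴ * A) k ω‖ ≤ μ₁ l :=
    fun l Ω ω hΩ hω => (hμ₁ l).2 ⟨Ω, ω, hΩ, hω, rfl⟩
  obtain ⟨k, hk⟩ := Function.ne_iff.mp hx
  obtain ⟨a, haΛ, hmax⟩ := Λ.exists_max_image (fun k => ‖x k‖) ⟨k, (hΛ k).mp hk⟩
  have hpos : 0 < ‖x a‖ := (norm_pos_iff.mpr hk).trans_le (hmax k ((hΛ k).mp hk))
  have hupper : ‖(Aᴴ *ᵥ (A *ᵥ x)) j‖ ≤ ‖x a‖ * μ₁ L :=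
    (norm_conjTranspose_mulVec_mulVec_le hsupp hmax j).trans
      (mul_le_mul_of_nonneg_left (hbabel L Λ j hcard hjΛ) hpos.le)
  have hcard_erase : (Λ.erase a).card ≤ L - 1 := by rw [card_erase_of_mem haΛ]; omega
  have hlower : ‖x a‖ * (1 - μ₁ (L - 1)) ≤ ‖(Aᴴ *ᵥ (A *ᵥ x)) a‖ :=
    (mul_le_mul_of_nonneg_left
      (sub_le_sub_left (hbabel _ _ a hcard_erase (notMem_erase a Λ)) 1) hpos.le).trans
      (le_norm_conjTranspose_mulVec_mulVec hsupp hmax haΛ (gram_diag_eq_one (hnorm a)))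
  have hsup := le_sup' (fun j' => ‖∑ t, (starRingEnd ℂ) (A t j') * y t‖) (mem_univ a)
  subst hy
  change lam * _ ≤ ‖(Aᴴ *ᵥ (A *ᵥ x)) j‖ at hj
  change ‖(Aᴴ *ᵥ (A *ᵥ x)) a‖ ≤ _ at hsup
  linarith [mul_le_mul_of_nonneg_left (hlower.trans hsup) hlam0.le,
    mul_lt_mul_of_pos_left hERC hpos]

/-- Weak OMP selection: if `μ₁(L) < λ(1 - μ₁(L-1))` with weakness
parameter `0 < λ ≤ 1`, then for any nonzero `L`-sparse `x` with support `Λ` and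
`y = Ax`, every index whose correlation is at least `λ` times the maximal
correlation lies in `Λ`. -/
theorem stmt_18 (T P L : ℕ) (hL : 1 ≤ L)
    (A : Matrix (Fin T) (Fin P) ℂ)
    (hnorm : ∀ j, ∑ t, ‖A t j‖ ^ 2 = 1)
    (μ₁ : ℕ → ℝ)
    (hμ₁ : ∀ l, IsGreatest
      {x : ℝ | ∃ (Ω : Finset (Fin P)) (ω : Fin P),
        Ω.card ≤ l ∧ ω ∉ Ω ∧
        x = ∑ j ∈ Ω, ‖∑ t, (starRingEnd ℂ) (A t j) * A t ω‖} (μ₁ l))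
    (lam : ℝ) (hlam0 : 0 < lam) (hlam1 : lam ≤ 1)
    (hERC : μ₁ L < lam * (1 - μ₁ (L - 1)))
    (x : Fin P → ℂ) (hx : x ≠ 0) (Λ : Finset (Fin P))
    (hΛ : ∀ j, x j ≠ 0 ↔ j ∈ Λ) (hcard : Λ.card ≤ L)
    (y : Fin T → ℂ) (hy : y = A.mulVec x)
    (hP : (Finset.univ : Finset (Fin P)).Nonempty) :
    ∀ j : Fin P,
      lam * (Finset.univ.sup' hP
          (fun j' => ‖∑ t, (starRingEnd ℂ) (A t j') * y t‖)) ≤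
        ‖∑ t, (starRingEnd ℂ) (A t j) * y t‖ →
      j ∈ Λ :=
  stmt_18_general T P L A hnorm μ₁ hμ₁ lam hlam0 hERC x hx Λ hΛ hcard y hy hP
end
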